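/- arXiv:2403.08794 — 3 statements merged into one kernel-verified Lean document; each statement's English description precedes it below -/
import Mathlib

section
/- Let V be a Euclidean vector space of dimension m+1 and let μ be a Borel probability measure on the space H* of affine hyperplanes in V. Suppose (e,x) ∈ S(V) × ℝ (with S(V) the unit sphere of V) satisfies μ{[f,y] ∈ H* : y·f(e) ≥ x·f(e)²} = 1/2 − 3δ, where δ > 0. Then there is an open neighbourhood N of (e,x) in S(V) × ℝ such that μ{[f,y] ∈ H* : y·f(e') ≥ x'·f(e')²} < 1/2 − δ for all (e',x') ∈ N. -/
open MeasureTheory ENNReal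

/-- The equivalence relation on pairs `(f, y)`, with `f` a nonzero (continuous) linear form
on `V` and `y : ℝ`, identifying `(f, y)` with `(t • f, t * y)` for `t ≠ 0`.  The quotient is
the space `H*` of affine hyperplanes `{v | f v = y}` in `V`. -/
def hypSetoid (V : Type*) [NormedAddCommGroup V] [NormedSpace ℝ V] :
    Setoid ({f : V →L[ℝ] ℝ // f ≠ 0} × ℝ) where
  r p q := ∃ t : ℝ, t ≠ 0 ∧ (q.1 : V →L[ℝ] ℝ) = t • (p.1 : V →L[ℝ] ℝ) ∧ q.2 = t * p.2
  iseqv := by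
    constructor
    · intro p
      exact ⟨1, one_ne_zero, (one_smul ℝ _).symm, (one_mul _).symm⟩
    · rintro p q ⟨t, ht, h1, h2⟩
      exact ⟨t⁻¹, inv_ne_zero ht,
        by rw [h1, smul_smul, inv_mul_cancel₀ ht, one_smul],
        by rw [h2, ← mul_assoc, inv_mul_cancel₀ ht, one_mul]⟩
    · rintro p q r ⟨t, ht, h1, h2⟩ ⟨u, hu, h3, h4⟩
      exact ⟨u * t, mul_ne_zero hu ht,
        by rw [h3, h1, smul_smul], by rw [h4, h2, mul_assoc]⟩

/-- The space `H*` of affine hyperplanes in `V`. -/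
def HypSpace (V : Type*) [NormedAddCommGroup V] [NormedSpace ℝ V] :=
  Quotient (hypSetoid V)

/-- `H*` carries the quotient topology. -/
noncomputable instance (V : Type*) [NormedAddCommGroup V] [NormedSpace ℝ V] :
    TopologicalSpace (HypSpace V) :=
  instTopologicalSpaceQuotient

/-- `H*` carries the Borel σ-algebra of the quotient topology. -/
noncomputable instance (V : Type*) [NormedAddCommGroup V] [NormedSpace ℝ V] :
    MeasurableSpace (HypSpace V) :=
  borel _

/-- The affine hyperplane `[f, y] = {v | f v = y}` as a point of `H*`. -/
def hypMk {V : Type*} [NormedAddCommGroup V] [NormedSpace ℝ V]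
    (f : V →L[ℝ] ℝ) (hf : f ≠ 0) (y : ℝ) : HypSpace V :=
  Quotient.mk (hypSetoid V) (⟨f, hf⟩, y)

/-!
Normalising `y * f e - x * (f e) ^ 2` by `‖f‖² + y²` gives a scale-invariant, hence well-defined,
continuous function `φ_{e,x} = hypDefect e x` on `H*` whose nonnegativity set is the half-space condition. The
normalisation makes `φ_{e',x'}` uniformly close to `φ_{e,x}` when `(e', x')` is close to `(e, x)`,
so near `(e, x)` the set `{φ_{e',x'} ≥ 0}` lies inside `{φ_{e,x} ≥ -ε}`. By continuity from
above, the measure of the latter is below `1/2 - δ` for small `ε > 0`, since at `ε = 0` it is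
`1/2 - 3δ`.
-/

open Filter Topology Set

section Measure

variable {X : Type*} [MeasurableSpace X] {μ : Measure X} [IsFiniteMeasure μ]

lemma exists_pos_measure_setOf_neg_le_lt {φ : X → ℝ} (hφ : Measurable φ) {c : ℝ≥0∞}
    (h : μ {z | 0 ≤ φ z} < c) : ∃ ε > 0, μ {z | -ε ≤ φ z} < c := by
  have hinter : ⋂ ε > (0 : ℝ), {z | -ε ≤ φ z} = {z | 0 ≤ φ z} := by
    ext z
    simp only [mem_iInter, mem_ofPred_eq]
    refine ⟨fun hz => le_of_forall_pos_le_add fun ε hε => ?_, fun hz ε hε => by linarith⟩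
    linarith [hz ε hε]
  have htendsto : Tendsto (fun ε : ℝ => μ {z | -ε ≤ φ z}) (𝓝[>] 0) (𝓝 (μ {z | 0 ≤ φ z})) := by
    rw [← hinter]
    refine tendsto_measure_biInter_gt
      (fun ε _ => (measurableSet_le measurable_const hφ).nullMeasurableSet)
      (fun i j _ hij z hz => ?_) ⟨1, one_pos, measure_ne_top μ _⟩
    simp only [mem_ofPred_eq] at hz ⊢
    linarith
  exact ((htendsto.eventually (gt_mem_nhds h)).and self_mem_nhdsWithin).exists.imp
    fun ε hε => ⟨hε.2, hε.1⟩

end Measure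

section Defect

variable {V : Type*} [NormedAddCommGroup V]

noncomputable def defectModulus (e : V) (x : ℝ) (e' : V) (x' : ℝ) : ℝ :=
  ‖e' - e‖ * (1 + |x| * (‖e‖ + ‖e'‖)) + |x' - x| * ‖e'‖ ^ 2

lemma continuous_defectModulus (e : V) (x : ℝ) :
    Continuous fun p : V × ℝ => defectModulus e x p.1 p.2 := by
  unfold defectModulus
  fun_prop

@[simp]
lemma defectModulus_self (e : V) (x : ℝ) : defectModulus e x e x = 0 := by
  simp [defectModulus]

variable [NormedSpace ℝ V]

instance : BorelSpace (HypSpace V) := ⟨rfl⟩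

noncomputable def defectRep (e : V) (x : ℝ) (f : V →L[ℝ] ℝ) (y : ℝ) : ℝ :=
  (y * f e - x * (f e) ^ 2) / (‖f‖ ^ 2 + y ^ 2)

lemma defectRep_smul (e : V) (x : ℝ) (f : V →L[ℝ] ℝ) (y : ℝ) {t : ℝ} (ht : t ≠ 0) :
    defectRep e x (t • f) (t * y) = defectRep e x f y := by
  have hden : ‖t • f‖ ^ 2 + (t * y) ^ 2 = t ^ 2 * (‖f‖ ^ 2 + y ^ 2) := by
    rw [norm_smul, Real.norm_eq_abs, mul_pow, sq_abs]
    ring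
  have hnum : t * y * (t * f e) - x * (t * f e) ^ 2 = t ^ 2 * (y * f e - x * (f e) ^ 2) := by
    ring
  simp only [defectRep, smul_apply, smul_eq_mul]
  rw [hden, hnum, mul_div_mul_left _ _ (pow_ne_zero 2 ht)]

lemma norm_sq_add_sq_pos {f : V →L[ℝ] ℝ} (hf : f ≠ 0) (y : ℝ) : 0 < ‖f‖ ^ 2 + y ^ 2 := by
  have := norm_pos_iff.mpr hf
  positivity

lemma defectRep_nonneg_iff (e : V) (x : ℝ) {f : V →L[ℝ] ℝ} (hf : f ≠ 0) (y : ℝ) :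
    0 ≤ defectRep e x f y ↔ x * (f e) ^ 2 ≤ y * f e := by
  rw [defectRep, le_div_iff₀ (norm_sq_add_sq_pos hf y), zero_mul, sub_nonneg]

lemma abs_defectRep_sub_le (e e' : V) (x x' : ℝ) {f : V →L[ℝ] ℝ} (hf : f ≠ 0) (y : ℝ) :
    |defectRep e' x' f y - defectRep e x f y| ≤ defectModulus e x e' x' := by
  have hD := norm_sq_add_sq_pos hf y
  rw [defectRep, defectRep, ← sub_div, abs_div, abs_of_pos hD, div_le_iff₀ hD]
  set D := ‖f‖ ^ 2 + y ^ 2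
  set d := ‖e' - e‖
  have hd : 0 ≤ d := norm_nonneg _
  have hdiff : |f e' - f e| ≤ ‖f‖ * d := by rw [← map_sub]; exact f.le_opNorm _
  have ha : |f e| ≤ ‖f‖ * ‖e‖ := f.le_opNorm e
  have hb : |f e'| ≤ ‖f‖ * ‖e'‖ := f.le_opNorm e'
  have hyf : |y| * ‖f‖ ≤ D := by nlinarith [sq_abs y, sq_nonneg (|y| - ‖f‖), abs_nonneg y]
  have hf2 : ‖f‖ ^ 2 ≤ D := le_add_of_nonneg_right (sq_nonneg y)
  have h1 : |y * (f e' - f e)| ≤ d * D := by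
    rw [abs_mul]
    calc |y| * |f e' - f e| ≤ |y| * (‖f‖ * d) := by gcongr
      _ = d * (|y| * ‖f‖) := by ring
      _ ≤ d * D := by gcongr
  have h2 : |x * (f e' ^ 2 - f e ^ 2)| ≤ d * (|x| * (‖e‖ + ‖e'‖)) * D := by
    have hsum : |f e' + f e| ≤ ‖f‖ * (‖e‖ + ‖e'‖) := by
      linarith [abs_add_le (f e') (f e)]
    rw [sq_sub_sq, abs_mul, abs_mul]
    calc |x| * (|f e' + f e| * |f e' - f e|)
        ≤ |x| * (‖f‖ * (‖e‖ + ‖e'‖) * (‖f‖ * d)) := by gcongr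
      _ = d * (|x| * (‖e‖ + ‖e'‖)) * ‖f‖ ^ 2 := by ring
      _ ≤ d * (|x| * (‖e‖ + ‖e'‖)) * D := by gcongr
  have h3 : |(x' - x) * f e' ^ 2| ≤ |x' - x| * ‖e'‖ ^ 2 * D := by
    rw [abs_mul, abs_pow]
    calc |x' - x| * |f e'| ^ 2 ≤ |x' - x| * (‖f‖ * ‖e'‖) ^ 2 := by gcongr
      _ = |x' - x| * ‖e'‖ ^ 2 * ‖f‖ ^ 2 := by ring
      _ ≤ |x' - x| * ‖e'‖ ^ 2 * D := by gcongr
  calc |y * f e' - x' * f e' ^ 2 - (y * f e - x * f e ^ 2)|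
      = |y * (f e' - f e) - x * (f e' ^ 2 - f e ^ 2) - (x' - x) * f e' ^ 2| := by ring_nf
    _ ≤ |y * (f e' - f e)| + |x * (f e' ^ 2 - f e ^ 2)| + |(x' - x) * f e' ^ 2| :=
        (abs_sub _ _).trans (add_le_add_left (abs_sub _ _) _)
    _ ≤ defectModulus e x e' x' * D := by
        rw [defectModulus]
        linarith

noncomputable def hypDefect (e : V) (x : ℝ) : HypSpace V → ℝ :=
  Quotient.lift (fun p => defectRep e x p.1.1 p.2) fun _ _ ⟨_, ht, hf, hy⟩ => by
    simp only [hf, hy, defectRep_smul e x _ _ ht]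

lemma hypDefect_hypMk (e : V) (x : ℝ) (f : V →L[ℝ] ℝ) (hf : f ≠ 0) (y : ℝ) :
    hypDefect e x (hypMk f hf y) = defectRep e x f y :=
  rfl

lemma continuous_hypDefect (e : V) (x : ℝ) : Continuous (hypDefect e x) := by
  refine Continuous.quotient_lift ?_ _
  have hfe : Continuous fun p : {f : V →L[ℝ] ℝ // f ≠ 0} × ℝ => p.1.1 e := by fun_prop
  have hnorm : Continuous fun p : {f : V →L[ℝ] ℝ // f ≠ 0} × ℝ => ‖p.1.1‖ := by fun_prop
  exact ((continuous_snd.mul hfe).sub (continuous_const.mul (hfe.pow 2))).div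
    ((hnorm.pow 2).add (continuous_snd.pow 2)) fun p => (norm_sq_add_sq_pos p.1.2 p.2).ne'

lemma abs_hypDefect_sub_le (e e' : V) (x x' : ℝ) (h : HypSpace V) :
    |hypDefect e' x' h - hypDefect e x h| ≤ defectModulus e x e' x' := by
  induction h using Quotient.ind with
  | _ p => exact abs_defectRep_sub_le e e' x x' p.1.2 p.2

lemma setOf_halfspace_eq (e : V) (x : ℝ) :
    {h : HypSpace V | ∃ (f : V →L[ℝ] ℝ) (hf : f ≠ 0) (y : ℝ),
        h = hypMk f hf y ∧ x * (f e) ^ 2 ≤ y * f e} = {h | 0 ≤ hypDefect e x h} := by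
  ext h
  constructor
  · rintro ⟨f, hf, y, rfl, hxy⟩
    exact (defectRep_nonneg_iff e x hf y).mpr hxy
  · intro hh
    obtain ⟨⟨⟨f, hf⟩, y⟩, rfl⟩ := Quotient.exists_rep h
    exact ⟨f, hf, y, rfl, (defectRep_nonneg_iff e x hf y).mp hh⟩

end Defect

theorem measure_halfspace_continuity_general {V : Type*} [NormedAddCommGroup V]
    [InnerProductSpace ℝ V]
    (μ : Measure (HypSpace V)) [IsProbabilityMeasure μ]
    (e : V) (x δ : ℝ) (hδ : 0 < δ)
    (hμ : (μ {h : HypSpace V | ∃ (f : V →L[ℝ] ℝ) (hf : f ≠ 0) (y : ℝ),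
        h = hypMk f hf y ∧ x * (f e) ^ 2 ≤ y * f e}).toReal = 1 / 2 - 3 * δ) :
    ∃ N : Set (V × ℝ), IsOpen N ∧ (e, x) ∈ N ∧
      ∀ e' x', (e', x') ∈ N → ‖e'‖ = 1 →
        (μ {h : HypSpace V | ∃ (f : V →L[ℝ] ℝ) (hf : f ≠ 0) (y : ℝ),
            h = hypMk f hf y ∧ x' * (f e') ^ 2 ≤ y * f e'}).toReal < 1 / 2 - δ := by
  rw [setOf_halfspace_eq] at hμ
  have hlt : μ {h | 0 ≤ hypDefect e x h} < ENNReal.ofReal (1 / 2 - δ) := by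
    rw [ENNReal.lt_ofReal_iff_toReal_lt (measure_ne_top μ _), hμ]
    linarith
  obtain ⟨ε, hε, hμε⟩ :=
    exists_pos_measure_setOf_neg_le_lt (continuous_hypDefect e x).measurable hlt
  refine ⟨{p | defectModulus e x p.1 p.2 < ε},
    isOpen_lt (continuous_defectModulus e x) continuous_const, by simpa using hε, ?_⟩
  intro e' x' hN _
  have hsub : {h | 0 ≤ hypDefect e' x' h} ⊆ {h | -ε ≤ hypDefect e x h} :=
    fun h (hh : 0 ≤ hypDefect e' x' h) => show -ε ≤ hypDefect e x h by
      linarith [(abs_sub_lt_iff.mp ((abs_hypDefect_sub_le e e' x x' h).trans_lt hN)).1]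
  rw [setOf_halfspace_eq]
  exact ENNReal.toReal_lt_of_lt_ofReal ((measure_mono hsub).trans_lt hμε)

/-- **Continuity lemma.** Let `μ` be a Borel probability measure on the space `H*` of
affine hyperplanes in the Euclidean vector space `V` of dimension `m + 1`.  If
`(e, x) ∈ S(V) × ℝ` satisfies `μ {[f, y] : y * f e ≥ x * (f e)^2} = 1/2 - 3δ` with
`δ > 0`, then there is an open neighbourhood `N` of `(e, x)` (in `S(V) × ℝ`, given here
as the trace on `S(V) × ℝ` of an open subset of `V × ℝ`) such that
`μ {[f, y] : y * f e' ≥ x' * (f e')^2} < 1/2 - δ` for all `(e', x') ∈ N`. -/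
theorem measure_halfspace_continuity {V : Type*} [NormedAddCommGroup V]
    [InnerProductSpace ℝ V] (m : ℕ) (hdim : Module.finrank ℝ V = m + 1)
    (μ : Measure (HypSpace V)) [IsProbabilityMeasure μ]
    (e : V) (he : ‖e‖ = 1) (x δ : ℝ) (hδ : 0 < δ)
    (hμ : (μ {h : HypSpace V | ∃ (f : V →L[ℝ] ℝ) (hf : f ≠ 0) (y : ℝ),
        h = hypMk f hf y ∧ x * (f e) ^ 2 ≤ y * f e}).toReal = 1 / 2 - 3 * δ) :
    ∃ N : Set (V × ℝ), IsOpen N ∧ (e, x) ∈ N ∧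
      ∀ e' x', (e', x') ∈ N → ‖e'‖ = 1 →
        (μ {h : HypSpace V | ∃ (f : V →L[ℝ] ℝ) (hf : f ≠ 0) (y : ℝ),
            h = hypMk f hf y ∧ x' * (f e') ^ 2 ≤ y * f e'}).toReal < 1 / 2 - δ :=
  measure_halfspace_continuity_general μ e x δ hδ hμ
end

section
/- Let V be a real vector space of dimension m+1 with basis e_0, …, e_m and dual basis f_0, …, f_m. Set H_j = {v ∈ V : f_j(v) = 1} for j = 0, …, m, and H' = {v ∈ V : f_0(v) + ⋯ + f_m(v) = 0}. Then there is no pair (L,v), with L a line through the origin in V and v ∈ L, such that each of the two closed rays in L starting at v meets or is parallel to every one of the m+2 hyperplanes H_0, …, H_m, H'. (Hence the restriction l ≤ m in the hyperplane Ham Sandwich theorem is optimal.) -/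
/-- The closed ray `{v + t • w : t ≥ 0}` in the line `v + ℝw`. -/
def ray {V : Type*} [AddCommGroup V] [Module ℝ V] (v w : V) : Set V :=
  {p | ∃ t : ℝ, 0 ≤ t ∧ p = v + t • w}

/-- A subset `H` of `V` (thought of as an affine hyperplane) is parallel to the line
`L = ℝw` if it is invariant under translation by every element of `L`.  For a hyperplane
`H = {v | f v = y}` this says exactly that `f` vanishes on `L`. -/
def IsParallelTo {V : Type*} [AddCommGroup V] [Module ℝ V] (H : Set V) (w : V) : Prop :=
  ∀ a ∈ H, ∀ t : ℝ, a + t • w ∈ H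

/-- Each of the two closed rays in the line `L = ℝw` starting at `v ∈ L` meets `H` or is
parallel to `L`. -/
def RaysMeetOrParallel {V : Type*} [AddCommGroup V] [Module ℝ V]
    (H : Set V) (v w : V) : Prop :=
  ((H ∩ ray v w).Nonempty ∨ IsParallelTo H w) ∧
  ((H ∩ ray v (-w)).Nonempty ∨ IsParallelTo H w)


/-!
If a linear form `f` does not vanish on the line `ℝw`, the hyperplane `{f = y}` is not parallel
to it, and `f` is strictly monotone along it; so the two opposite rays from `v` can both meet
`{f = y}` only at `v` itself, i.e. `f v = y`. With `v = s • w`, this forces `s * f_j w = 1`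
whenever `f_j w ≠ 0`, and such a `j` exists since `w ≠ 0`. Hence
`s * ∑ j, f_j w` is a sum of zeros and ones, not all zero, so it is positive; then
`∑ j, f_j` does not vanish on `ℝw` either, and the same argument gives `s * ∑ j, f_j w = 0`.
-/

section RaysMeetOrParallel

variable {V : Type*} [AddCommGroup V] [Module ℝ V]

lemma not_isParallelTo_setOf_eq {f : V →ₗ[ℝ] ℝ} {w : V} (hw : f w ≠ 0) (y : ℝ) :
    ¬ IsParallelTo {u | f u = y} w := by
  intro hpar
  have hmem : (y / f w) • w ∈ {u | f u = y} := by
    simp [div_mul_cancel₀ _ hw]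
  have hshift := hpar _ hmem 1
  simp only [Set.mem_ofPred_eq, map_add, map_smul, smul_eq_mul, one_mul] at hmem hshift
  exact hw (by linarith)

lemma exists_nonneg_of_mem_setOf_eq_inter_ray {f : V →ₗ[ℝ] ℝ} {y : ℝ} {v w : V}
    (h : ({u | f u = y} ∩ ray v w).Nonempty) : ∃ t : ℝ, 0 ≤ t ∧ y = f v + t * f w := by
  obtain ⟨p, hp, t, ht, rfl⟩ := h
  exact ⟨t, ht, by simpa using hp.symm⟩

lemma RaysMeetOrParallel.apply_eq {f : V →ₗ[ℝ] ℝ} {y : ℝ} {v w : V} (hw : f w ≠ 0)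
    (h : RaysMeetOrParallel {u | f u = y} v w) : f v = y := by
  have hpar := not_isParallelTo_setOf_eq hw y
  obtain ⟨t, ht, hy⟩ := exists_nonneg_of_mem_setOf_eq_inter_ray (h.1.resolve_right hpar)
  obtain ⟨s, hs, hy'⟩ := exists_nonneg_of_mem_setOf_eq_inter_ray (h.2.resolve_right hpar)
  rw [map_neg] at hy'
  have hts : (t + s) * f w = 0 := by linarith
  have ht0 : t = 0 := by
    linarith [(mul_eq_zero.mp hts).resolve_right hw]
  rw [hy, ht0, zero_mul, add_zero]

lemma RaysMeetOrParallel.mul_apply_eq {f : V →ₗ[ℝ] ℝ} {y s : ℝ} {w : V} (hw : f w ≠ 0)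
    (h : RaysMeetOrParallel {u | f u = y} (s • w) w) : s * f w = y := by
  simpa using h.apply_eq hw

end RaysMeetOrParallel

/-- **Optimality of `l ≤ m`.**  Let `V` have basis `e_0, …, e_m` with dual basis
`f_0, …, f_m`.  Set `H_j = {v | f_j v = 1}` and `H' = {v | f_0 v + ⋯ + f_m v = 0}`.
Then there is no pair `(L, v)`, with `L = ℝw` a line through the origin and `v ∈ L`,
such that each of the two closed rays in `L` starting at `v` meets or is parallel to
every one of the `m + 2` hyperplanes `H_0, …, H_m, H'`. -/
theorem no_solution_for_m_plus_two_hyperplanes {V : Type*} [AddCommGroup V] [Module ℝ V]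
    (m : ℕ) (b : Module.Basis (Fin (m + 1)) ℝ V) :
    ¬ ∃ (w v : V), w ≠ 0 ∧ (∃ t : ℝ, v = t • w) ∧
        (∀ j : Fin (m + 1), RaysMeetOrParallel {u : V | b.coord j u = 1} v w) ∧
        RaysMeetOrParallel {u : V | (∑ j : Fin (m + 1), b.coord j u) = 0} v w := by
  rintro ⟨w, _, hw, ⟨s, rfl⟩, hH, hH'⟩
  have hcoord (j : Fin (m + 1)) : s * b.coord j w = 0 ∨ s * b.coord j w = 1 := by
    rcases eq_or_ne (b.coord j w) 0 with h | h
    · exact .inl (by rw [h, mul_zero])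
    · exact .inr ((hH j).mul_apply_eq h)
  obtain ⟨j₀, hj₀⟩ : ∃ j, b.coord j w ≠ 0 := by
    by_contra! h
    exact hw (b.forall_coord_eq_zero_iff.mp h)
  set F : V →ₗ[ℝ] ℝ := ∑ j, b.coord j
  have hF : s * F w = ∑ j, s * b.coord j w := by
    rw [LinearMap.sum_apply, Finset.mul_sum]
  have hpos : 0 < s * F w :=
    calc (0 : ℝ) < 1 := one_pos
      _ = s * b.coord j₀ w := ((hH j₀).mul_apply_eq hj₀).symm
      _ ≤ ∑ j, s * b.coord j w :=
          Finset.single_le_sum (f := fun j => s * b.coord j w)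
            (fun j _ => (hcoord j).elim (·.ge) (· ▸ zero_le_one)) (Finset.mem_univ j₀)
      _ = s * F w := hF.symm
  have hH'F : RaysMeetOrParallel {u | F u = 0} (s • w) w := by
    simpa only [F, LinearMap.sum_apply] using hH'
  exact hpos.ne' (hH'F.mul_apply_eq (right_ne_zero_of_mul hpos.ne'))
end

section
/- Let V be a Euclidean vector space of dimension m+1 and let μ be a Borel probability measure on the space H* of affine hyperplanes in V. Suppose (e_n)_{n≥1} is a sequence in the unit sphere S(V) converging to e ∈ S(V) such that μ{[f,y] ∈ H* : ‖f‖ = 1 and |f(e_n)| ≤ |y|/n} ≥ 1/2 for every n ≥ 1. Then μ{[f,y] ∈ H* : f(e) = 0} ≥ 1/2; consequently, for every x ∈ ℝ the point [e,x] ∈ H satisfies μ{[f,y] ∈ H* : y·f(e) ≥ x·f(e)²} ≥ 1/2 and μ{[f,y] ∈ H* : y·f(e) ≤ x·f(e)²} ≥ 1/2. -/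
open MeasureTheory ENNReal

/-!
Each set `Aₙ = {[f, y] : |f eₙ| ≤ |y| / n}` is closed, so by the reverse Fatou lemma for a finite
measure, `μ (limsup Aₙ) ≥ 1/2`. A hyperplane lying in infinitely many `Aₙ` satisfies
`f e = lim f eₙ = 0`. When `f e = 0` both inequalities `y f e ≷ x (f e)²` hold trivially.
-/

theorem le_measure_limsup_atTop {α : Type*} [MeasurableSpace α] {μ : Measure α}
    [IsFiniteMeasure μ] {s : ℕ → Set α} (hs : ∀ n, NullMeasurableSet (s n) μ) {a : ℝ≥0∞}
    (ha : ∀ᶠ n in Filter.atTop, a ≤ μ (s n)) : a ≤ μ (Filter.limsup s Filter.atTop) := by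
  set t : ℕ → Set α := fun N => ⋃ n ≥ N, s n
  have ht_anti : Antitone t := fun N M hNM =>
    Set.biUnion_subset_biUnion_left fun n hn => le_trans hNM hn
  have ht_meas : ∀ N, NullMeasurableSet (t N) μ := fun N =>
    .iUnion fun n => .iUnion fun _ => hs n
  obtain ⟨N₀, hN₀⟩ := Filter.eventually_atTop.mp ha
  rw [Filter.limsup_eq_iInf_iSup_of_nat]
  change a ≤ μ (⋂ N, t N)
  rw [ht_anti.measure_iInter ht_meas ⟨0, measure_ne_top μ _⟩]
  refine le_iInf fun N => (hN₀ (max N N₀) (le_max_right N N₀)).trans (measure_mono ?_)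
  exact Set.subset_biUnion_of_mem (u := s) (le_max_left N N₀)

theorem eq_zero_of_frequently_abs_le {ι : Type*} {l : Filter ι} {u b : ι → ℝ} {a : ℝ}
    (hu : Filter.Tendsto u l (nhds a)) (hb : Filter.Tendsto b l (nhds 0))
    (h : ∃ᶠ i in l, |u i| ≤ b i) : a = 0 :=
  abs_nonpos_iff.mp (le_of_tendsto_of_tendsto_of_frequently hu.abs hb h)

section HypSpace

variable {V : Type*} [NormedAddCommGroup V] [NormedSpace ℝ V]

instance inst_s9 : BorelSpace (HypSpace V) := ⟨rfl⟩

def hypSetOf (Q : (V →L[ℝ] ℝ) → ℝ → Prop) : Set (HypSpace V) :=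
  {h | ∃ (f : V →L[ℝ] ℝ) (hf : f ≠ 0) (y : ℝ), h = hypMk f hf y ∧ Q f y}

/-- Scale invariance makes `Q` a well-defined condition on hyperplanes `[f, y]`. -/
def ScaleInvariant (Q : (V →L[ℝ] ℝ) → ℝ → Prop) : Prop :=
  ∀ t : ℝ, t ≠ 0 → ∀ f y, Q f y → Q (t • f) (t * y)

variable {Q R : (V →L[ℝ] ℝ) → ℝ → Prop}

theorem hypSetOf_mono (h : ∀ f y, Q f y → R f y) : hypSetOf Q ⊆ hypSetOf R :=
  fun _ ⟨f, hf, y, hq, hQ⟩ => ⟨f, hf, y, hq, h f y hQ⟩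

theorem hypMk_mem_hypSetOf_iff (hQ : ScaleInvariant Q) {f : V →L[ℝ] ℝ} (hf : f ≠ 0) {y : ℝ} :
    hypMk f hf y ∈ hypSetOf Q ↔ Q f y := by
  refine ⟨?_, fun h => ⟨f, hf, y, rfl, h⟩⟩
  rintro ⟨g, hg, z, hq, hgz⟩
  obtain ⟨t, ht, hf_eq, hy_eq⟩ := Quotient.exact hq.symm
  simp only at hf_eq hy_eq
  rw [hf_eq, hy_eq]
  exact hQ t ht g z hgz

theorem isClosed_hypSetOf (hQ : ScaleInvariant Q)
    (hc : IsClosed {p : {f : V →L[ℝ] ℝ // f ≠ 0} × ℝ | Q p.1 p.2}) :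
    IsClosed (hypSetOf Q) := by
  refine isQuotientMap_quot_mk.isClosed_preimage.mp ?_
  convert hc using 1
  ext ⟨⟨f, hf⟩, y⟩
  exact hypMk_mem_hypSetOf_iff hQ hf

/-- Every hyperplane has a representative `(f, y)` with `‖f‖ = 1`. -/
theorem hypSetOf_norm_eq_one (hQ : ScaleInvariant Q) :
    hypSetOf (fun f y => ‖f‖ = 1 ∧ Q f y) = hypSetOf Q := by
  refine subset_antisymm (hypSetOf_mono fun _ _ h => h.2) ?_
  rintro _ ⟨f, hf, y, rfl, hfy⟩
  have ht : ‖f‖⁻¹ ≠ 0 := inv_ne_zero (norm_ne_zero_iff.mpr hf)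
  refine ⟨‖f‖⁻¹ • f, smul_ne_zero ht hf, ‖f‖⁻¹ * y, Quotient.sound ⟨_, ht, rfl, rfl⟩, ?_,
    hQ _ ht f y hfy⟩
  rw [norm_smul, norm_inv, norm_norm, inv_mul_cancel₀ (norm_ne_zero_iff.mpr hf)]

theorem scaleInvariant_abs_apply_le (v : V) (c : ℝ) :
    ScaleInvariant fun (f : V →L[ℝ] ℝ) y => |f v| ≤ |y| / c := by
  intro t _ f y h
  rw [smul_apply, smul_eq_mul, abs_mul, abs_mul, mul_div_assoc]
  exact mul_le_mul_of_nonneg_left h (abs_nonneg t)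

theorem isClosed_hypSetOf_abs_apply_le (v : V) (c : ℝ) :
    IsClosed (hypSetOf fun f y => |f v| ≤ |y| / c) := by
  refine isClosed_hypSetOf (scaleInvariant_abs_apply_le v c) (isClosed_le ?_ ?_)
  · exact ((ContinuousLinearMap.apply ℝ ℝ v).continuous.comp
      (continuous_subtype_val.comp continuous_fst)).abs
  · exact continuous_snd.abs.div_const c

theorem limsup_hypSetOf_abs_apply_le_subset {e : ℕ → V} {e₀ : V}
    (hconv : Filter.Tendsto e Filter.atTop (nhds e₀)) :
    Filter.limsup (fun n : ℕ => hypSetOf fun f y => |f (e n)| ≤ |y| / n) Filter.atTop ⊆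
      hypSetOf fun f _ => f e₀ = 0 := by
  intro h hmem
  rw [Filter.mem_limsup_iff_frequently_mem] at hmem
  obtain ⟨⟨⟨f, hf⟩, y⟩, rfl⟩ := Quotient.exists_rep h
  refine ⟨f, hf, y, rfl, eq_zero_of_frequently_abs_le ((f.continuous.tendsto e₀).comp hconv)
    (tendsto_const_div_atTop_nhds_zero_nat |y|) ?_⟩
  exact hmem.mono fun n hn => (hypMk_mem_hypSetOf_iff (scaleInvariant_abs_apply_le _ _) hf).mp hn

end HypSpace

theorem degenerate_case_general {V : Type*} [NormedAddCommGroup V] [InnerProductSpace ℝ V]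
    (μ : Measure (HypSpace V)) [IsProbabilityMeasure μ]
    (e : ℕ → V)
    (e₀ : V) (hconv : Filter.Tendsto e Filter.atTop (nhds e₀))
    (hseq : ∀ n : ℕ, 1 ≤ n →
      (1 : ℝ≥0∞) / 2 ≤ μ {h : HypSpace V | ∃ (f : V →L[ℝ] ℝ) (hf : f ≠ 0) (y : ℝ),
          h = hypMk f hf y ∧ ‖f‖ = 1 ∧ |f (e n)| ≤ |y| / n}) :
    (1 : ℝ≥0∞) / 2 ≤ μ {h : HypSpace V | ∃ (f : V →L[ℝ] ℝ) (hf : f ≠ 0) (y : ℝ),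
        h = hypMk f hf y ∧ f e₀ = 0} ∧
    ∀ x : ℝ,
      (1 : ℝ≥0∞) / 2 ≤ μ {h : HypSpace V | ∃ (f : V →L[ℝ] ℝ) (hf : f ≠ 0) (y : ℝ),
          h = hypMk f hf y ∧ x * (f e₀) ^ 2 ≤ y * f e₀} ∧
      (1 : ℝ≥0∞) / 2 ≤ μ {h : HypSpace V | ∃ (f : V →L[ℝ] ℝ) (hf : f ≠ 0) (y : ℝ),
          h = hypMk f hf y ∧ y * f e₀ ≤ x * (f e₀) ^ 2} := by
  have hzero : (1 : ℝ≥0∞) / 2 ≤ μ (hypSetOf fun f _ => f e₀ = 0) := by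
    have hsets : ∀ n : ℕ, hypSetOf (fun f y => ‖f‖ = 1 ∧ |f (e n)| ≤ |y| / n) =
        hypSetOf fun f y => |f (e n)| ≤ |y| / n :=
      fun n => hypSetOf_norm_eq_one (scaleInvariant_abs_apply_le _ _)
    calc (1 : ℝ≥0∞) / 2
        ≤ μ (Filter.limsup (fun n : ℕ => hypSetOf fun f y => |f (e n)| ≤ |y| / n)
            Filter.atTop) :=
          le_measure_limsup_atTop
            (fun n => (isClosed_hypSetOf_abs_apply_le _ _).measurableSet.nullMeasurableSet)
            (Filter.eventually_atTop.mpr ⟨1, fun n hn => hsets n ▸ hseq n hn⟩)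
      _ ≤ μ (hypSetOf fun f _ => f e₀ = 0) :=
          measure_mono (limsup_hypSetOf_abs_apply_le_subset hconv)
  refine ⟨hzero, fun x => ⟨?_, ?_⟩⟩
  · exact hzero.trans (measure_mono (hypSetOf_mono fun f y h => by simp [h]))
  · exact hzero.trans (measure_mono (hypSetOf_mono fun f y h => by simp [h]))

/-- **Degenerate case lemma.** Let `μ` be a Borel probability measure on the space `H*`
of affine hyperplanes in the Euclidean vector space `V` of dimension `m + 1`.  If
`(e_n)_{n ≥ 1}` is a sequence in the unit sphere `S(V)` converging to `e ∈ S(V)` with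
`μ {[f, y] : ‖f‖ = 1, |f e_n| ≤ |y| / n} ≥ 1/2` for all `n ≥ 1`, then
`μ {[f, y] : f e = 0} ≥ 1/2`; consequently, for every `x : ℝ` the point `[e, x] ∈ H`
satisfies `μ {[f, y] : y * f e ≥ x * (f e)^2} ≥ 1/2` and
`μ {[f, y] : y * f e ≤ x * (f e)^2} ≥ 1/2`. -/
theorem degenerate_case {V : Type*} [NormedAddCommGroup V] [InnerProductSpace ℝ V]
    (m : ℕ) (hdim : Module.finrank ℝ V = m + 1)
    (μ : Measure (HypSpace V)) [IsProbabilityMeasure μ]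
    (e : ℕ → V) (he : ∀ n, ‖e n‖ = 1)
    (e₀ : V) (he₀ : ‖e₀‖ = 1) (hconv : Filter.Tendsto e Filter.atTop (nhds e₀))
    (hseq : ∀ n : ℕ, 1 ≤ n →
      (1 : ℝ≥0∞) / 2 ≤ μ {h : HypSpace V | ∃ (f : V →L[ℝ] ℝ) (hf : f ≠ 0) (y : ℝ),
          h = hypMk f hf y ∧ ‖f‖ = 1 ∧ |f (e n)| ≤ |y| / n}) :
    (1 : ℝ≥0∞) / 2 ≤ μ {h : HypSpace V | ∃ (f : V →L[ℝ] ℝ) (hf : f ≠ 0) (y : ℝ),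
        h = hypMk f hf y ∧ f e₀ = 0} ∧
    ∀ x : ℝ,
      (1 : ℝ≥0∞) / 2 ≤ μ {h : HypSpace V | ∃ (f : V →L[ℝ] ℝ) (hf : f ≠ 0) (y : ℝ),
          h = hypMk f hf y ∧ x * (f e₀) ^ 2 ≤ y * f e₀} ∧
      (1 : ℝ≥0∞) / 2 ≤ μ {h : HypSpace V | ∃ (f : V →L[ℝ] ℝ) (hf : f ≠ 0) (y : ℝ),
          h = hypMk f hf y ∧ y * f e₀ ≤ x * (f e₀) ^ 2} :=
  degenerate_case_general μ e e₀ hconv hseq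
end
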